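/- Let (X_n)_{n≥0} be a transient, weakly symmetric, suffix-irreducible random walk on a regular language over a finite alphabet 𝒜 which is not expanding. Then there is a finite set F of infinite words ξ ∈ 𝒜^ℕ such that almost surely there exists ξ ∈ F with: for every N ∈ ℕ there is n₀ ∈ ℕ such that for all n ≥ n₀ the word X_n has length at least N and its first N letters agree with the first N letters of ξ. (In other words, the random limiting infinite word X_∞ of the transient walk has finite support.) -/

import Mathlib

/-!
Weak symmetry gives every `w ∈ ℒ` a return path `w ⟶ o`, so `G(o,w) · p⁽ᵐ⁾(w,o) ≤ G(o,o) < ∞`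
and, by Borel–Cantelli, almost surely every word is visited finitely often. Then `|X_n| → ∞`, and
since a step rewrites only the last two letters, every prefix of `X_n` stabilises: `X_n` converges
to an infinite word. After its last visit to length `≤ 2`, at a word `v` of length `2`, the walk
stays in the cone `C(v)`, so the limit is an end of one of the finitely many cones `C(v)`,
`|v| = 2`. Such a cone has at most one end: two distinct ends give two disjoint proper subcones of
`C(v)`, and suffix-irreducibility copies this branching into every cone, so the walk would be
expanding.
-/

open MeasureTheory Filter Topology
open scoped ENNReal Classical

/-- A random walk on a regular language over the finite alphabet `A`:
a Markov chain on finite words whose one-step transitions replace at most the last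
two letters of the current word by a (nonempty, from long words) word of length at
most three, with probabilities `p` depending only on the last two letters of the
current word and on the replacing word. -/
structure RLRW (A : Type) [Fintype A] [DecidableEq A] where
  /-- the local transition probabilities -/
  p : List A → List A → ℝ
  /-- the full one-step transition probabilities between words -/
  step : List A → List A → ℝ
  step_nonneg : ∀ u v, 0 ≤ step u v
  step_hasSum : ∀ u, HasSum (step u) 1
  /-- from a word of length `≥ 2`, the last two letters are replaced by a word of
  length `1`, `2` or `3`, with probability depending only on these data -/
  step_long : ∀ (w x y : List A), x.length = 2 → 1 ≤ y.length → y.length ≤ 3 →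
    step (w ++ x) (w ++ y) = p x y
  /-- transitions from words of length `≤ 1` -/
  step_short : ∀ (x y : List A), x.length ≤ 1 → y.length ≤ x.length + 1 → step x y = p x y
  /-- no other transition is possible -/
  step_support : ∀ u v, 0 < step u v →
    ∃ w x y : List A, u = w ++ x ∧ v = w ++ y ∧ x.length = min u.length 2 ∧
      y.length ≤ x.length + 1 ∧ x.length ≤ y.length + 1

namespace RLRW

variable {A : Type} [Fintype A] [DecidableEq A]

/-- `n`-step transition probabilities `p⁽ⁿ⁾(u,v)`. -/
noncomputable def pstep (M : RLRW A) : ℕ → List A → List A → ℝ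
  | 0, u, v => if u = v then 1 else 0
  | (n + 1), u, v => ∑' w : List A, M.pstep n u w * M.step w v

/-- `n`-step transition probabilities where all the words visited at times `1,…,n`
are required to lie in the set `S`. -/
noncomputable def pstepIn (M : RLRW A) (S : Set (List A)) : ℕ → List A → List A → ℝ
  | 0, u, v => if u = v then 1 else 0
  | (n + 1), u, v => if v ∈ S then ∑' w : List A, M.pstepIn S n u w * M.step w v else 0

/-- The set `ℒ` of words accessible from the empty word. -/
def Lang (M : RLRW A) : Set (List A) := {w | ∃ n, 0 < M.pstep n [] w}

/-- Weak symmetry of the random walk. -/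
def WeaklySymmetric (M : RLRW A) : Prop := ∀ u v, 0 < M.step u v → 0 < M.step v u

/-- Suffix-irreducibility of the random walk. -/
def SuffixIrreducible (M : RLRW A) : Prop :=
  ∀ (w₀ : List A) (a₀ b₀ : A), w₀ ++ [a₀, b₀] ∈ M.Lang → ∀ a b : A,
    ∃ (n : ℕ) (w₁ : List A),
      0 < M.pstepIn {v | (w₀ ++ [a₀, b₀]).length ≤ v.length} n (w₀ ++ [a₀, b₀])
          (w₀ ++ w₁ ++ [a, b])

/-- Transience of the random walk restricted to `ℒ` (finiteness of the Green function). -/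
def Transient (M : RLRW A) : Prop := ∀ w ∈ M.Lang, Summable fun n => M.pstep n w w

/-- Recurrence of the random walk restricted to `ℒ`. -/
def Recurrent (M : RLRW A) : Prop := ∀ w ∈ M.Lang, ¬ Summable fun n => M.pstep n w w

/-- The entropy sequence `E[-log π_n(X_n)] = ∑_w π_n(w)·(-log π_n(w))`, where `π_n`
is the distribution of `X_n`. -/
noncomputable def entropySeq (M : RLRW A) (n : ℕ) : ℝ :=
  ∑' w : List A, M.pstep n [] w * (-Real.log (M.pstep n [] w))

/-- `X` is (a version of) the random walk given by `M`, started at the empty word,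
on the probability space `(Ω, P)`: its finite-dimensional distributions are the ones
prescribed by the one-step transition probabilities. -/
def IsRandomWalk (M : RLRW A) {Ω : Type} [MeasurableSpace Ω] (P : Measure Ω)
    (X : ℕ → Ω → List A) : Prop :=
  ∀ (n : ℕ) (w : ℕ → List A),
    P {ω | ∀ i ≤ n, X i ω = w i} =
      ENNReal.ofReal ((if w 0 = ([] : List A) then 1 else 0) *
        ∏ i ∈ Finset.range n, M.step (w i) (w (i + 1)))

/-- The word formed by the last two letters of `w`. -/
def lastTwo (w : List A) : List A := w.drop (w.length - 2)

/-- The cone rooted at `w₀`: all words `w` of length `≥ |w₀|` reachable from `w₀` by a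
path through words of length `≥ |w₀|`. -/
def Cone (M : RLRW A) (w₀ : List A) : Set (List A) :=
  {w | ∃ (n : ℕ) (f : ℕ → List A), f 0 = w₀ ∧ f n = w ∧
    (∀ i ≤ n, w₀.length ≤ (f i).length) ∧ ∀ i < n, 0 < M.step (f i) (f (i + 1))}

/-- The boundary `∂C(w)` of a cone. -/
def coneBoundary (M : RLRW A) (w : List A) : Set (List A) :=
  {w' | w' ∈ M.Cone w ∧ w'.length = w.length ∧ ∃ w'', w'' ∉ M.Cone w ∧ 0 < M.step w' w''}

/-- The random walk is expanding if every cone rooted at a word of `ℒ` contains two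
disjoint proper subcones rooted at words of `ℒ`. -/
def Expanding (M : RLRW A) : Prop :=
  ∀ w₀ ∈ M.Lang, 2 ≤ w₀.length →
    ∃ w₁ w₂ : List A, w₁ ∈ M.Lang ∧ w₂ ∈ M.Lang ∧ w₁ ∈ M.Cone w₀ ∧ w₂ ∈ M.Cone w₀ ∧
      M.Cone w₁ ⊂ M.Cone w₀ ∧ M.Cone w₂ ⊂ M.Cone w₀ ∧ M.Cone w₁ ∩ M.Cone w₂ = ∅

/-- Probability of a first visit to `v` at time exactly `n` (for `n ≥ 1`),
starting from `u`. -/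
noncomputable def firstVisit (M : RLRW A) : ℕ → List A → List A → ℝ
  | 0, _, _ => 0
  | 1, u, v => M.step u v
  | (n + 2), u, v => ∑' w : List A, if w = v then 0 else M.step u w * M.firstVisit (n + 1) w v

/-- The hitting probability `P[∃ n ≥ 0 : X_n = v | X_0 = u]`. -/
noncomputable def hitProb (M : RLRW A) (u v : List A) : ℝ :=
  if u = v then 1 else ∑' n : ℕ, M.firstVisit n u v

/-- The Greenian distance `d_Green(u,v) = - log P[∃ n ≥ 0 : X_n = v | X_0 = u]`. -/
noncomputable def dGreen (M : RLRW A) (u v : List A) : ℝ := -Real.log (M.hitProb u v)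

/-- The last-visit generating function `L(o,w|1)`. -/
noncomputable def lastVisitGF (M : RLRW A) (w : List A) : ℝ :=
  ∑' n : ℕ, M.pstepIn {v | v ≠ ([] : List A)} n [] w

end RLRW

open Relation

section

variable {α : Type*}

theorem Relation.reflTransGen_iff_exists_seq {r : α → α → Prop} {a b : α} :
    ReflTransGen r a b ↔
      ∃ (n : ℕ) (f : ℕ → α), f 0 = a ∧ f n = b ∧ ∀ i < n, r (f i) (f (i + 1)) := by
  constructor
  · intro h
    induction h with
    | refl => exact ⟨0, fun _ => a, rfl, rfl, by simp⟩
    | @tail b c _ hbc ih =>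
      obtain ⟨n, f, hf0, hfn, hf⟩ := ih
      refine ⟨n + 1, Function.update f (n + 1) c, by simp [hf0], by simp, fun i hi => ?_⟩
      rcases Nat.lt_succ_iff_lt_or_eq.1 hi with hi | rfl
      · rw [Function.update_of_ne (by omega), Function.update_of_ne (by omega)]
        exact hf i hi
      · simpa [hfn] using hbc
  · rintro ⟨n, f, rfl, rfl, hf⟩
    induction n with
    | zero => exact .refl
    | succ n ih => exact (ih fun i hi => hf i (by omega)).tail (hf n (by omega))

theorem List.exists_forall_eq_ofFn {c : ℕ → List α} (hlen : ∀ k, (c k).length = k)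
    (hpre : ∀ k, c k <+: c (k + 1)) : ∃ ξ : ℕ → α, ∀ k, c k = List.ofFn fun i : Fin k => ξ i := by
  refine ⟨fun i => (c (i + 1))[i]'(by simp [hlen]), fun k => ?_⟩
  induction k with
  | zero => simpa using hlen 0
  | succ k ih =>
    obtain ⟨t, ht⟩ := hpre k
    obtain ⟨a, rfl⟩ : ∃ a, t = [a] := List.length_eq_one_iff.1 (by
      have := congrArg List.length ht
      simp only [List.length_append, hlen] at this
      omega)
    simp only [List.ofFn_succ', Fin.val_castSucc, Fin.val_last, ← ih, ← ht,
      List.concat_eq_append]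
    simp [hlen]

theorem List.exists_eq_append_pair {l : List α} (h : 2 ≤ l.length) :
    ∃ u a b, l = u ++ [a, b] := by
  obtain ⟨a, b, hab⟩ := List.length_eq_two.1 (by simp; omega : (l.drop (l.length - 2)).length = 2)
  exact ⟨l.take (l.length - 2), a, b, by rw [← hab, List.take_append_drop]⟩

theorem tendsto_length_atTop_of_finite_fibers [Finite α] {f : ℕ → List α}
    (hf : ∀ w, {n | f n = w}.Finite) : Tendsto (fun n => (f n).length) atTop atTop := by
  rw [← Nat.cofinite_eq_atTop]
  have hlen : Tendsto (List.length (α := α)) cofinite cofinite :=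
    Tendsto.cofinite_of_finite_preimage_singleton fun k => List.finite_length_eq α k
  exact hlen.comp (Tendsto.cofinite_of_finite_preimage_singleton fun w => hf w)

theorem MeasureTheory.ae_pos_measure_fiber {Ω β : Type*} [MeasurableSpace Ω] [Countable β]
    (μ : Measure Ω) (Y : Ω → β) : ∀ᵐ ω ∂μ, 0 < μ (Y ⁻¹' {Y ω}) := by
  rw [ae_iff]
  refine measure_mono_null (fun ω hω => Set.mem_biUnion (x := Y ω) ?_ rfl)
    ((measure_biUnion_null_iff (Set.to_countable {b | μ (Y ⁻¹' {b}) = 0})).2 fun b hb => hb)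
  simpa using hω

def TendstoInfWord (f : ℕ → List α) (ξ : ℕ → α) : Prop :=
  ∀ N : ℕ, ∀ᶠ n in atTop, N ≤ (f n).length ∧ (f n).take N = List.ofFn fun i : Fin N => ξ i

lemma TendstoInfWord.comp_add {f : ℕ → List α} {ξ : ℕ → α}
    (h : TendstoInfWord f ξ) (T : ℕ) : TendstoInfWord (fun n => f (T + n)) ξ := fun N =>
  ((tendsto_add_atTop_nat T).eventually (h N)).mono fun n hn => by rwa [add_comm] at hn

end

namespace RLRW

variable {A : Type} [Fintype A] [DecidableEq A] (M : RLRW A)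

/-- `p⁽ⁿ⁾`, valued in `ℝ≥0∞` so that no summability is needed. -/
noncomputable def stepPow : ℕ → List A → List A → ℝ≥0∞
  | 0, u, v => if u = v then 1 else 0
  | n + 1, u, v => ∑' w, stepPow n u w * ENNReal.ofReal (M.step w v)

@[simp]
lemma stepPow_zero (u v : List A) : M.stepPow 0 u v = if u = v then 1 else 0 := rfl

lemma stepPow_succ (n : ℕ) (u v : List A) :
    M.stepPow (n + 1) u v = ∑' w, M.stepPow n u w * ENNReal.ofReal (M.step w v) := rfl

lemma stepPow_one (u v : List A) : M.stepPow 1 u v = ENNReal.ofReal (M.step u v) := by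
  rw [stepPow_succ, tsum_eq_single u (fun w hw => by simp [Ne.symm hw])]
  simp

lemma tsum_stepPow (n : ℕ) (u : List A) : ∑' v, M.stepPow n u v = 1 := by
  induction n generalizing u with
  | zero => rw [tsum_eq_single u (fun v hv => by simp [Ne.symm hv])]; simp
  | succ n ih =>
    have hrow : ∀ w, ∑' v, ENNReal.ofReal (M.step w v) = 1 := fun w => by
      rw [← ENNReal.ofReal_tsum_of_nonneg (M.step_nonneg w) (M.step_hasSum w).summable,
        (M.step_hasSum w).tsum_eq, ENNReal.ofReal_one]
    simp_rw [stepPow_succ]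
    rw [ENNReal.tsum_comm]
    simp_rw [ENNReal.tsum_mul_left, hrow, mul_one, ih]

lemma stepPow_ne_top (n : ℕ) (u v : List A) : M.stepPow n u v ≠ ⊤ :=
  ne_top_of_le_ne_top ENNReal.one_ne_top (M.tsum_stepPow n u ▸ ENNReal.le_tsum v)

lemma pstep_eq_toReal_stepPow (n : ℕ) (u v : List A) :
    M.pstep n u v = (M.stepPow n u v).toReal := by
  induction n generalizing v with
  | zero => simp [pstep, apply_ite ENNReal.toReal]
  | succ n ih =>
    rw [pstep, stepPow_succ, ENNReal.tsum_toReal_eq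
      fun w => ENNReal.mul_ne_top (M.stepPow_ne_top n u w) ENNReal.ofReal_ne_top]
    simp_rw [ENNReal.toReal_mul, ih, ENNReal.toReal_ofReal (M.step_nonneg _ v)]

lemma stepPow_mul_stepPow_le (m n : ℕ) (u w v : List A) :
    M.stepPow m u w * M.stepPow n w v ≤ M.stepPow (m + n) u v := by
  induction n generalizing v with
  | zero => by_cases h : w = v <;> simp [h]
  | succ n ih =>
    rw [stepPow_succ, ← add_assoc, stepPow_succ, ← ENNReal.tsum_mul_left]
    refine ENNReal.tsum_le_tsum fun z => ?_
    rw [← mul_assoc]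
    exact mul_le_mul_left (ih z) _

lemma reflTransGen_of_stepPow_ne_zero {n : ℕ} {u v : List A} (h : M.stepPow n u v ≠ 0) :
    ReflTransGen (fun x y => 0 < M.step x y) u v := by
  induction n generalizing v with
  | zero =>
    obtain rfl : u = v := by by_contra huv; simp [huv] at h
    exact .refl
  | succ n ih =>
    obtain ⟨w, hw⟩ : ∃ w, M.stepPow n u w * ENNReal.ofReal (M.step w v) ≠ 0 := by
      by_contra! h0
      exact h (by rw [stepPow_succ, ENNReal.tsum_eq_zero.2 h0])
    rw [mul_ne_zero_iff, ENNReal.ofReal_ne_zero_iff] at hw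
    exact (ih hw.1).tail hw.2

lemma exists_stepPow_ne_zero_of_reflTransGen {u v : List A}
    (h : ReflTransGen (fun x y => 0 < M.step x y) u v) : ∃ n, M.stepPow n u v ≠ 0 := by
  induction h with
  | refl => exact ⟨0, by simp⟩
  | @tail w z _ hwz ih =>
    obtain ⟨n, hn⟩ := ih
    refine ⟨n + 1, ne_bot_of_le_ne_bot ?_ (M.stepPow_mul_stepPow_le n 1 u w z)⟩
    rw [stepPow_one]
    exact mul_ne_zero hn (ENNReal.ofReal_pos.2 hwz).ne'

lemma mem_lang_iff {w : List A} :
    w ∈ M.Lang ↔ ReflTransGen (fun x y => 0 < M.step x y) [] w := by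
  change (∃ n, 0 < M.pstep n [] w) ↔ _
  simp_rw [pstep_eq_toReal_stepPow, ENNReal.toReal_pos_iff, pos_iff_ne_zero]
  exact ⟨fun ⟨_, hn, _⟩ => M.reflTransGen_of_stepPow_ne_zero hn,
    fun h => (M.exists_stepPow_ne_zero_of_reflTransGen h).imp fun n hn =>
      ⟨hn, (M.stepPow_ne_top n [] w).lt_top⟩⟩

lemma tsum_stepPow_nil_ne_top (hT : M.Transient) (hWS : M.WeaklySymmetric) (w : List A) :
    ∑' n, M.stepPow n [] w ≠ ⊤ := by
  have hG : ∑' n, M.stepPow n [] [] ≠ ⊤ := by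
    have hsum := hT [] (M.mem_lang_iff.2 .refl)
    simp_rw [pstep_eq_toReal_stepPow] at hsum
    have h := ENNReal.ofReal_tsum_of_nonneg (fun _ => ENNReal.toReal_nonneg) hsum
    simp_rw [ENNReal.ofReal_toReal (M.stepPow_ne_top _ _ _)] at h
    exact h ▸ ENNReal.ofReal_ne_top
  by_cases hw : w ∈ M.Lang
  · obtain ⟨m, hm⟩ := M.exists_stepPow_ne_zero_of_reflTransGen
      (reflTransGen_swap.1 (ReflTransGen.mono (fun x y h => hWS x y h) _ _ (M.mem_lang_iff.1 hw)))
    have hle : (∑' n, M.stepPow n [] w) * M.stepPow m w [] ≤ ∑' n, M.stepPow n [] [] := by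
      rw [← ENNReal.tsum_mul_right]
      exact (ENNReal.tsum_le_tsum fun n => M.stepPow_mul_stepPow_le n m [] w []).trans
        (ENNReal.tsum_comp_le_tsum_of_injective (add_left_injective m) _)
    intro htop
    rw [htop, ENNReal.top_mul hm, top_le_iff] at hle
    exact hG hle
  · convert ENNReal.zero_ne_top
    refine ENNReal.tsum_eq_zero.2 fun n => by_contra fun hn => hw ?_
    exact M.mem_lang_iff.2 (M.reflTransGen_of_stepPow_ne_zero hn)

lemma length_le_of_step_pos {u v : List A} (h : 0 < M.step u v) :
    u.length ≤ v.length + 1 ∧ v.length ≤ u.length + 1 := by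
  obtain ⟨w, x, y, rfl, rfl, -, hy, hx⟩ := M.step_support u v h
  simp only [List.length_append]
  omega

lemma take_eq_of_step_pos {u v : List A} (h : 0 < M.step u v) {k : ℕ}
    (hk : k + 2 ≤ u.length) : v.take k = u.take k := by
  obtain ⟨w, x, y, rfl, rfl, hx, -, -⟩ := M.step_support u v h
  simp only [List.length_append] at hx hk
  rw [List.take_append_of_le_length (by omega), List.take_append_of_le_length (by omega)]

/-- Transitions out of words of length `≥ 2` only see the last two letters. -/
lemma step_append_pos {u c₁ c₂ : List A} (u' : List A) (hc : 2 ≤ c₁.length)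
    (h : 0 < M.step (u ++ c₁) (u ++ c₂)) : 0 < M.step (u' ++ c₁) (u' ++ c₂) := by
  obtain ⟨w, x, y, hu, hv, hx, hy, hx'⟩ := M.step_support _ _ h
  simp only [List.length_append] at hx
  obtain ⟨d, rfl, rfl⟩ : ∃ d, w = u ++ d ∧ c₁ = d ++ x := by
    rcases List.append_eq_append_iff.1 hu with ⟨d, hw, hc₁⟩ | ⟨d, hu, hx₁⟩
    · exact ⟨d, hw, hc₁⟩
    · obtain rfl : d = [] := List.eq_nil_of_length_eq_zero (by
        have := congrArg List.length hx₁
        simp only [List.length_append] at this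
        omega)
      simp_all
  obtain rfl : c₂ = d ++ y := by simpa using hv
  have hval : ∀ u', M.step (u' ++ (d ++ x)) (u' ++ (d ++ y)) = M.p x y := fun u' => by
    simp only [← List.append_assoc]
    exact M.step_long _ x y (by omega) (by omega) (by omega)
  rwa [hval] at h ⊢

def StepAbove (ℓ : ℕ) (u v : List A) : Prop := 0 < M.step u v ∧ ℓ ≤ v.length

lemma mem_cone_iff {w₀ w : List A} : w ∈ M.Cone w₀ ↔ ReflTransGen (M.StepAbove w₀.length) w₀ w := by
  rw [reflTransGen_iff_exists_seq]
  constructor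
  · rintro ⟨n, f, hf0, hfn, hlen, hf⟩
    exact ⟨n, f, hf0, hfn, fun i hi => ⟨hf i hi, hlen (i + 1) hi⟩⟩
  · rintro ⟨n, f, hf0, hfn, hf⟩
    refine ⟨n, f, hf0, hfn, fun i hi => ?_, fun i hi => (hf i hi).1⟩
    cases i with
    | zero => rw [hf0]
    | succ i => exact (hf i hi).2

lemma mem_cone_self (w : List A) : w ∈ M.Cone w :=
  M.mem_cone_iff.2 .refl

lemma length_le_of_mem_cone {w₀ w : List A} (h : w ∈ M.Cone w₀) : w₀.length ≤ w.length := by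
  obtain ⟨n, f, -, rfl, hlen, -⟩ := h
  exact hlen n le_rfl

lemma cone_subset_of_mem {w₀ w : List A} (h : w ∈ M.Cone w₀) : M.Cone w ⊆ M.Cone w₀ := by
  intro w' h'
  rw [mem_cone_iff] at h h' ⊢
  exact h.trans (ReflTransGen.mono (fun _ _ hs => ⟨hs.1, (M.length_le_of_mem_cone
    (M.mem_cone_iff.2 h)).trans hs.2⟩) _ _ h')

lemma cone_ssubset_of_mem {w₀ w : List A} (h : w ∈ M.Cone w₀) (hlt : w₀.length < w.length) :
    M.Cone w ⊂ M.Cone w₀ :=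
  (Set.ssubset_iff_of_subset (M.cone_subset_of_mem h)).2
    ⟨w₀, M.mem_cone_self w₀, fun h' => (M.length_le_of_mem_cone h').not_gt hlt⟩

lemma take_eq_of_mem_cone {w₀ w : List A} (h : w ∈ M.Cone w₀) {k : ℕ}
    (hk : k + 2 ≤ w₀.length) : w.take k = w₀.take k := by
  rw [mem_cone_iff] at h
  induction h with
  | refl => rfl
  | @tail y z hy hyz ih =>
    rw [M.take_eq_of_step_pos hyz.1 (hk.trans (M.length_le_of_mem_cone (M.mem_cone_iff.2 hy))),
      ih]

lemma disjoint_cone_of_take_ne {w₁ w₂ : List A} {k : ℕ} (h : w₁.take k ≠ w₂.take k)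
    (h₁ : k + 2 ≤ w₁.length) (h₂ : k + 2 ≤ w₂.length) : Disjoint (M.Cone w₁) (M.Cone w₂) :=
  Set.disjoint_left.2 fun _ hw₁ hw₂ =>
    h ((M.take_eq_of_mem_cone hw₁ h₁).symm.trans (M.take_eq_of_mem_cone hw₂ h₂))

lemma mem_lang_of_mem_cone {w₀ w : List A} (hw₀ : w₀ ∈ M.Lang) (h : w ∈ M.Cone w₀) :
    w ∈ M.Lang :=
  M.mem_lang_iff.2 ((M.mem_lang_iff.1 hw₀).trans
    (ReflTransGen.mono (fun _ _ hs => hs.1) _ _ (M.mem_cone_iff.1 h)))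

lemma cone_append (u : List A) {z : List A} (hz : 2 ≤ z.length) :
    M.Cone (u ++ z) = (u ++ ·) '' M.Cone z := by
  ext w
  constructor
  · intro h
    rw [mem_cone_iff] at h
    induction h with
    | refl => exact ⟨z, M.mem_cone_self z, rfl⟩
    | @tail y w _ hyw ih =>
      obtain ⟨x, hx, rfl⟩ := ih
      have hx2 : 2 ≤ x.length := hz.trans (M.length_le_of_mem_cone hx)
      have hw : w = u ++ w.drop u.length := by
        conv_lhs => rw [← List.take_append_drop u.length w]
        rw [M.take_eq_of_step_pos hyw.1 (by simp; omega), List.take_left]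
      rw [hw] at hyw
      refine ⟨w.drop u.length, M.mem_cone_iff.2 ((M.mem_cone_iff.1 hx).tail ⟨?_, ?_⟩), hw.symm⟩
      · simpa using M.step_append_pos [] hx2 hyw.1
      · have := hyw.2
        simp only [List.length_append] at this
        omega
  · rintro ⟨x, hx, rfl⟩
    rw [mem_cone_iff] at hx ⊢
    induction hx with
    | refl => rfl
    | @tail y y' hy hyy' ih =>
      have hy2 : 2 ≤ y.length := hz.trans (M.length_le_of_mem_cone (M.mem_cone_iff.2 hy))
      refine ih.tail ⟨M.step_append_pos (u := []) u hy2 (by simpa using hyy'.1), ?_⟩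
      simp only [List.length_append]
      exact Nat.add_le_add_left hyy'.2 _

lemma mem_cone_of_pstepIn_ne_zero {n : ℕ} {w₀ w : List A}
    (h : M.pstepIn {v | w₀.length ≤ v.length} n w₀ w ≠ 0) : w ∈ M.Cone w₀ := by
  rw [mem_cone_iff]
  induction n generalizing w with
  | zero =>
    obtain rfl : w₀ = w := by by_contra hne; simp [pstepIn, hne] at h
    exact .refl
  | succ n ih =>
    rw [pstepIn] at h
    split_ifs at h with hw
    · obtain ⟨v, hv⟩ : ∃ v, M.pstepIn _ n w₀ v * M.step v w ≠ 0 := by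
        by_contra! h0
        exact h ((tsum_congr h0).trans tsum_zero)
      rw [mul_ne_zero_iff] at hv
      exact (ih hv.1).tail ⟨(M.step_nonneg v w).lt_of_ne' hv.2, hw⟩
    · exact absurd rfl h

lemma exists_append_pair_mem_cone (hSI : M.SuffixIrreducible) {w : List A} (hw : w ∈ M.Lang)
    (hw2 : 2 ≤ w.length) (a b : A) : ∃ u, u ++ [a, b] ∈ M.Cone w := by
  obtain ⟨w₀, a₀, b₀, rfl⟩ := List.exists_eq_append_pair hw2
  obtain ⟨n, w₁, hn⟩ := hSI w₀ a₀ b₀ hw a b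
  exact ⟨w₀ ++ w₁, M.mem_cone_of_pstepIn_ne_zero hn.ne'⟩

/-- Suffix-irreducibility transports a branching inside one cone into every cone. -/
theorem expanding_of_disjoint_cones (hSI : M.SuffixIrreducible) {v w₁ w₂ : List A}
    (hv : 2 ≤ v.length) (h₁ : w₁ ∈ M.Cone v) (h₂ : w₂ ∈ M.Cone v)
    (hlt₁ : v.length < w₁.length) (hlt₂ : v.length < w₂.length)
    (hdisj : Disjoint (M.Cone w₁) (M.Cone w₂)) : M.Expanding := by
  obtain ⟨v₀, a, b, rfl⟩ := List.exists_eq_append_pair hv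
  rw [M.cone_append v₀ (by simp)] at h₁ h₂
  obtain ⟨z₁, hz₁, rfl⟩ := h₁
  obtain ⟨z₂, hz₂, rfl⟩ := h₂
  have hz₁2 : 2 ≤ z₁.length := M.length_le_of_mem_cone hz₁
  have hz₂2 : 2 ≤ z₂.length := M.length_le_of_mem_cone hz₂
  simp only [List.length_append, List.length_cons, List.length_nil] at hlt₁ hlt₂
  rw [M.cone_append v₀ hz₁2, M.cone_append v₀ hz₂2,
    Set.disjoint_image_iff (List.append_right_injective v₀)] at hdisj
  intro w hw hw2
  obtain ⟨u, hu⟩ := M.exists_append_pair_mem_cone hSI hw hw2 a b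
  have hsub : ∀ z ∈ M.Cone [a, b], 3 ≤ z.length →
      u ++ z ∈ M.Lang ∧ u ++ z ∈ M.Cone w ∧ M.Cone (u ++ z) ⊂ M.Cone w := by
    intro z hz hz3
    have hmem : u ++ z ∈ M.Cone w :=
      M.cone_subset_of_mem hu (by rw [M.cone_append u (by simp)]; exact ⟨z, hz, rfl⟩)
    refine ⟨M.mem_lang_of_mem_cone hw hmem, hmem, M.cone_ssubset_of_mem hmem ?_⟩
    have := M.length_le_of_mem_cone hu
    simp only [List.length_append, List.length_cons, List.length_nil] at this ⊢
    omega
  obtain ⟨hL₁, hC₁, hS₁⟩ := hsub z₁ hz₁ (by omega)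
  obtain ⟨hL₂, hC₂, hS₂⟩ := hsub z₂ hz₂ (by omega)
  refine ⟨u ++ z₁, u ++ z₂, hL₁, hL₂, hC₁, hC₂, hS₁, hS₂, ?_⟩
  rw [← Set.disjoint_iff_inter_eq_empty, M.cone_append u hz₁2, M.cone_append u hz₂2,
    Set.disjoint_image_iff (List.append_right_injective u)]
  exact hdisj

def IsEnd (v : List A) (ξ : ℕ → A) : Prop :=
  ∃ f : ℕ → List A, f 0 = v ∧ (∀ n, M.StepAbove v.length (f n) (f (n + 1))) ∧
    TendstoInfWord f ξ

theorem isEnd_subsingleton (hSI : M.SuffixIrreducible) (hNE : ¬ M.Expanding) {v : List A}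
    (hv : 2 ≤ v.length) : {ξ | M.IsEnd v ξ}.Subsingleton := by
  have hcone : ∀ f : ℕ → List A, f 0 = v → (∀ n, M.StepAbove v.length (f n) (f (n + 1))) →
      ∀ n, f n ∈ M.Cone v := fun f hf0 hf n => by
    have := reflTransGen_iff_exists_seq (r := M.StepAbove v.length) |>.2
      ⟨n, f, rfl, rfl, fun i _ => hf i⟩
    rwa [hf0, ← mem_cone_iff] at this
  rintro ξ ⟨f, hf0, hf, hξ⟩ η ⟨g, hg0, hg, hη⟩
  by_contra hne
  obtain ⟨k, hk⟩ := Function.ne_iff.1 hne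
  have hpre : (List.ofFn fun i : Fin (k + 1) => ξ i) ≠ List.ofFn fun i : Fin (k + 1) => η i :=
    fun h => hk (congrFun (List.ofFn_inj.1 h) (Fin.last k))
  set L := max (k + 3) (v.length + 1)
  obtain ⟨n, ⟨hn, -⟩, -, hξn⟩ := ((hξ L).and (hξ (k + 1))).exists
  obtain ⟨m, ⟨hm, -⟩, -, hηm⟩ := ((hη L).and (hη (k + 1))).exists
  exact hNE (M.expanding_of_disjoint_cones hSI hv (hcone f hf0 hf n) (hcone g hg0 hg m)
    (by omega) (by omega)
    (M.disjoint_cone_of_take_ne (hξn ▸ hηm ▸ hpre) (by omega) (by omega)))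

theorem finite_setOf_isEnd (hSI : M.SuffixIrreducible) (hNE : ¬ M.Expanding) :
    {ξ | ∃ v : List A, v.length = 2 ∧ M.IsEnd v ξ}.Finite := by
  have hunion : {ξ | ∃ v : List A, v.length = 2 ∧ M.IsEnd v ξ} =
      ⋃ v ∈ {v : List A | v.length = 2}, {ξ | M.IsEnd v ξ} := by
    ext; simp
  rw [hunion]
  exact (List.finite_length_eq A 2).biUnion fun v hv => (M.isEnd_subsingleton hSI hNE hv.ge).finite

theorem exists_tendstoInfWord {f : ℕ → List A} (hf : ∀ n, 0 < M.step (f n) (f (n + 1)))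
    (hlen : Tendsto (fun n => (f n).length) atTop atTop) : ∃ ξ, TendstoInfWord f ξ := by
  have hstab : ∀ k, ∃ c : List A, ∀ᶠ n in atTop, (f n).take k = c := by
    intro k
    obtain ⟨N, hN⟩ := eventually_atTop.1 (hlen.eventually_ge_atTop (k + 2))
    refine ⟨(f N).take k, eventually_atTop.2 ⟨N, fun n hn => ?_⟩⟩
    induction n, hn using Nat.le_induction with
    | base => rfl
    | succ n hn ih => rw [M.take_eq_of_step_pos (hf n) (hN n hn), ih]
  choose c hc using hstab
  have hlenc : ∀ k, (c k).length = k := fun k => by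
    obtain ⟨n, hn, hk⟩ := ((hc k).and (hlen.eventually_ge_atTop k)).exists
    rw [← hn, List.length_take, min_eq_left hk]
  have hpre : ∀ k, c k <+: c (k + 1) := fun k => by
    obtain ⟨n, h₁, h₂⟩ := ((hc k).and (hc (k + 1))).exists
    rw [← h₁, ← h₂]
    exact List.take_prefix_take_left (Nat.le_succ k)
  obtain ⟨ξ, hξ⟩ := List.exists_forall_eq_ofFn hlenc hpre
  exact ⟨ξ, fun N => (hlen.eventually_ge_atTop N).and ((hc N).mono fun n hn => hn.trans (hξ N))⟩

lemma exists_last_exit {f : ℕ → List A} (hf : ∀ n, 0 < M.step (f n) (f (n + 1)))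
    (h0 : (f 0).length ≤ 2) (hlen : Tendsto (fun n => (f n).length) atTop atTop) :
    ∃ T, (f T).length = 2 ∧ ∀ n, M.StepAbove 2 (f (T + n)) (f (T + n + 1)) := by
  obtain ⟨N, hN⟩ := eventually_atTop.1 (hlen.eventually_ge_atTop 3)
  set T := Nat.findGreatest (fun n => (f n).length ≤ 2) N
  have hT : (f T).length ≤ 2 :=
    Nat.findGreatest_spec (P := fun n => (f n).length ≤ 2) (Nat.zero_le N) h0
  have hafter : ∀ m, T < m → 3 ≤ (f m).length := fun m hm => by
    by_cases hmN : m ≤ N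
    · exact not_le.1 (Nat.findGreatest_is_greatest (P := fun n => (f n).length ≤ 2) hm hmN)
    · exact hN m (by omega)
  refine ⟨T, ?_, fun n => ⟨hf (T + n), by have := hafter (T + n + 1) (by omega); omega⟩⟩
  have := hafter (T + 1) (by omega)
  have := (M.length_le_of_step_pos (hf T)).2
  omega

theorem exists_isEnd_of_trajectory {f : ℕ → List A} (hf0 : f 0 = [])
    (hf : ∀ n, 0 < M.step (f n) (f (n + 1)))
    (hlen : Tendsto (fun n => (f n).length) atTop atTop) :
    ∃ ξ, TendstoInfWord f ξ ∧ ∃ v : List A, v.length = 2 ∧ M.IsEnd v ξ := by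
  obtain ⟨ξ, hξ⟩ := M.exists_tendstoInfWord hf hlen
  obtain ⟨T, hT, hstep⟩ := M.exists_last_exit hf (by simp [hf0]) hlen
  exact ⟨ξ, hξ, f T, hT, fun n => f (T + n), rfl, by rwa [hT], hξ.comp_add T⟩

noncomputable def pathProb {n : ℕ} (p : Fin (n + 1) → List A) : ℝ≥0∞ :=
  ∏ i : Fin n, ENNReal.ofReal (M.step (p i.castSucc) (p i.succ))

lemma pathProb_snoc {n : ℕ} (p : Fin (n + 1) → List A) (a : List A) :
    M.pathProb (Fin.snoc (α := fun _ => List A) p a) =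
      M.pathProb p * ENNReal.ofReal (M.step (p (Fin.last n)) a) := by
  simp only [pathProb, Fin.prod_univ_castSucc (n := n), Fin.succ_castSucc, Fin.snoc_castSucc,
    Fin.succ_last, Fin.snoc_last]

lemma tsum_pathProb (n : ℕ) (u v : List A) :
    ∑' p : Fin (n + 1) → List A, (if p 0 = u ∧ p (Fin.last n) = v then M.pathProb p else 0) =
      M.stepPow n u v := by
  induction n generalizing v with
  | zero =>
    rw [← (Equiv.funUnique (Fin 1) (List A)).symm.tsum_eq, tsum_eq_single v (by simp +contextual)]
    by_cases h : u = v <;> simp [h, pathProb, Ne.symm]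
  | succ n ih =>
    have hterm : ∀ a (p : Fin (n + 1) → List A),
        (if Fin.snoc (α := fun _ => List A) p a 0 = u ∧
            Fin.snoc (α := fun _ => List A) p a (Fin.last (n + 1)) = v
          then M.pathProb (Fin.snoc (α := fun _ => List A) p a) else 0) =
        if a = v then
          (if p 0 = u then M.pathProb p else 0) * ENNReal.ofReal (M.step (p (Fin.last n)) v)
        else 0 := by
      intro a p
      have h0 : Fin.snoc (α := fun _ => List A) p a 0 = p 0 := Fin.snoc_castSucc (i := 0) ..
      by_cases ha : a = v <;> by_cases hp : p 0 = u <;> simp [ha, hp, h0, pathProb_snoc]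
    have hsnoc : ∀ x, (Fin.snocEquiv (n := n + 1) fun _ => List A) x =
        Fin.snoc (α := fun _ => List A) x.2 x.1 := fun _ => rfl
    rw [← (Fin.snocEquiv (n := n + 1) fun _ => List A).tsum_eq, ENNReal.tsum_prod']
    simp only [hsnoc, hterm]
    rw [tsum_eq_single v (fun a ha => by simp [ha]), stepPow_succ]
    simp_rw [← ih, ← ENNReal.tsum_mul_right]
    rw [ENNReal.tsum_comm]
    refine tsum_congr fun p => ?_
    rw [tsum_eq_single (p (Fin.last n)) (fun w hw => by simp [Ne.symm hw])]
    by_cases hp : p 0 = u <;> simp [hp]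

variable {M} {Ω : Type} [MeasurableSpace Ω] {P : Measure Ω} {X : ℕ → Ω → List A}

lemma IsRandomWalk.measure_cylinder (hX : M.IsRandomWalk P X) {n : ℕ}
    (p : Fin (n + 1) → List A) :
    P {ω | ∀ i : Fin (n + 1), X i ω = p i} = if p 0 = [] then M.pathProb p else 0 := by
  set w : ℕ → List A := fun i => if h : i < n + 1 then p ⟨i, h⟩ else []
  have hset : {ω | ∀ i : Fin (n + 1), X i ω = p i} = {ω | ∀ i ≤ n, X i ω = w i} := by
    ext ω
    simp only [Set.mem_ofPred_eq, w]
    exact ⟨fun h i hi => by simpa [Nat.lt_succ_of_le hi] using h ⟨i, by omega⟩,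
      fun h i => by simpa [i.isLt] using h i (by omega)⟩
  have hw0 : w 0 = p 0 := by simp [w]
  rw [hset, hX n w, hw0, ← Fin.prod_univ_eq_prod_range (fun i => M.step (w i) (w (i + 1)))]
  split_ifs
  · simp [pathProb, w, ENNReal.ofReal_prod_of_nonneg fun i _ => M.step_nonneg _ _]
    rfl
  · simp

lemma IsRandomWalk.ae_trajectory (hX : M.IsRandomWalk P X) :
    ∀ᵐ ω ∂P, X 0 ω = [] ∧ ∀ n, 0 < M.step (X n ω) (X (n + 1) ω) := by
  have hcyl : ∀ n, ∀ᵐ ω ∂P, 0 < P {ω' | ∀ i : Fin (n + 1), X i ω' = X i ω} := fun n => by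
    simpa only [Set.preimage, Set.mem_singleton_iff, funext_iff] using
      ae_pos_measure_fiber P fun ω (i : Fin (n + 1)) => X i ω
  filter_upwards [ae_all_iff.2 hcyl] with ω hω
  simp_rw [hX.measure_cylinder] at hω
  have hstart : X 0 ω = [] := by
    by_contra h
    simpa [h] using hω 0
  refine ⟨hstart, fun n => ?_⟩
  have hpos := hω (n + 1)
  simp only [Fin.val_zero, hstart, if_true, pathProb] at hpos
  simpa using Finset.prod_ne_zero_iff.1 hpos.ne' (Fin.last n) (Finset.mem_univ _)

lemma IsRandomWalk.measure_eq_le (hX : M.IsRandomWalk P X) (n : ℕ) (w : List A) :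
    P {ω | X n ω = w} ≤ M.stepPow n [] w :=
  calc P {ω | X n ω = w}
      ≤ ∑' p : Fin (n + 1) → List A,
          P ({ω | X n ω = w} ∩ {ω | ∀ i : Fin (n + 1), X i ω = p i}) := by
        refine (measure_mono fun ω hω => ?_).trans (measure_iUnion_le _)
        exact Set.mem_iUnion.2 ⟨fun i => X i ω, hω, fun _ => rfl⟩
    _ ≤ ∑' p : Fin (n + 1) → List A,
          if p 0 = [] ∧ p (Fin.last n) = w then M.pathProb p else 0 := by
        refine ENNReal.tsum_le_tsum fun p => ?_
        by_cases hp : p (Fin.last n) = w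
        · refine (measure_mono Set.inter_subset_right).trans ?_
          rw [hX.measure_cylinder]
          split_ifs <;> simp_all
        · rw [if_neg fun h => hp h.2]
          refine (measure_mono_null (fun ω hω => hp ?_) measure_empty).le
          exact (hω.2 (Fin.last n)).symm.trans hω.1
    _ = M.stepPow n [] w := M.tsum_pathProb n [] w

lemma IsRandomWalk.ae_finite_visits (hX : M.IsRandomWalk P X) (hT : M.Transient)
    (hWS : M.WeaklySymmetric) : ∀ᵐ ω ∂P, ∀ w, {n | X n ω = w}.Finite :=
  ae_all_iff.2 fun w => ae_finite_setOfPred_mem (ne_top_of_le_ne_top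
    (M.tsum_stepPow_nil_ne_top hT hWS w) (ENNReal.tsum_le_tsum fun n => hX.measure_eq_le n w))

end RLRW

theorem nonexpanding_limit_words_finite_general
    {A : Type} [Fintype A] [DecidableEq A] (M : RLRW A)
    (hT : M.Transient) (hWS : M.WeaklySymmetric) (hSI : M.SuffixIrreducible)
    (hNE : ¬ M.Expanding)
    {Ω : Type} [MeasurableSpace Ω] (P : MeasureTheory.Measure Ω)
    (X : ℕ → Ω → List A) (hX : M.IsRandomWalk P X) :
    ∃ F : Set (ℕ → A), F.Finite ∧
      ∀ᵐ ω ∂P, ∃ ξ ∈ F, ∀ N : ℕ, ∃ n₀ : ℕ, ∀ n, n₀ ≤ n →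
        N ≤ (X n ω).length ∧ (X n ω).take N = List.ofFn (fun i : Fin N => ξ i) := by
  refine ⟨_, M.finite_setOf_isEnd hSI hNE, ?_⟩
  filter_upwards [hX.ae_trajectory, hX.ae_finite_visits hT hWS] with ω ⟨hstart, hsteps⟩ hfin
  obtain ⟨ξ, hξ, hend⟩ :=
    M.exists_isEnd_of_trajectory hstart hsteps (tendsto_length_atTop_of_finite_fibers hfin)
  exact ⟨ξ, hend, fun N => eventually_atTop.1 (hξ N)⟩

/-- For a transient, weakly symmetric, suffix-irreducible random walk
on a regular language which is not expanding, there is a finite set `F` of infinite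
words such that almost surely the walk converges to some infinite word of `F`
(prefixes of any fixed length eventually stabilize and agree with that word). -/
theorem nonexpanding_limit_words_finite
    {A : Type} [Fintype A] [DecidableEq A] (M : RLRW A)
    (hT : M.Transient) (hWS : M.WeaklySymmetric) (hSI : M.SuffixIrreducible)
    (hNE : ¬ M.Expanding)
    {Ω : Type} [MeasurableSpace Ω] (P : MeasureTheory.Measure Ω)
    [MeasureTheory.IsProbabilityMeasure P]
    (X : ℕ → Ω → List A) (hX : M.IsRandomWalk P X) :
    ∃ F : Set (ℕ → A), F.Finite ∧
      ∀ᵐ ω ∂P, ∃ ξ ∈ F, ∀ N : ℕ, ∃ n₀ : ℕ, ∀ n, n₀ ≤ n →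
        N ≤ (X n ω).length ∧ (X n ω).take N = List.ofFn (fun i : Fin N => ξ i) :=
  nonexpanding_limit_words_finite_general M hT hWS hSI hNE P X hX
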